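/- arXiv:1911.04181 — 2 statements merged into one kernel-verified Lean document; each statement's English description precedes it below -/
import Mathlib

section
/- Let ρ' : Γ → PSL(2,ℂ) be a group homomorphism such that ρ'(qᵢ) = 1 for exactly one index i ∈ {1,…,6}. Then there is no group homomorphism σ : Γ₂ → SL(2,ℂ) such that π ∘ σ = ρ' ∘ ι, where π : SL(2,ℂ) → PSL(2,ℂ) is the quotient map. (In particular, a pentagon representation does not lift to SL(2,ℂ).) -/
/- Common setup: PSL(2,ℂ), its action on ℙ¹(ℂ), loxodromic/parabolic/elliptic elements,
elementary subgroups, surface groups, the pentagon group Γ and the embedding ι. -/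

noncomputable section

open Matrix

/-- `SL(2,ℂ)`. -/
abbrev SL2C : Type := Matrix.SpecialLinearGroup (Fin 2) ℂ

instance : TopologicalSpace SL2C := instTopologicalSpaceSubtype

/-- `PSL(2,ℂ)`, the quotient of `SL(2,ℂ)` by its center `{±I}`. -/
abbrev PSL2C : Type := SL2C ⧸ Subgroup.center SL2C

/-- The quotient map `SL(2,ℂ) → PSL(2,ℂ)`. -/
def projPSL : SL2C →* PSL2C := QuotientGroup.mk' (Subgroup.center SL2C)

/-- The complex projective line `ℙ¹(ℂ)`. -/
abbrev P1 : Type := Projectivization ℂ (Fin 2 → ℂ)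

/-- The square of the trace, well defined on `PSL(2,ℂ)`. -/
def trSq (g : PSL2C) : ℂ :=
  (Matrix.trace ((Quotient.out g : SL2C) : Matrix (Fin 2) (Fin 2) ℂ)) ^ 2

/-- `g` is loxodromic iff `tr² g` is not a real number in `[0,4]`. -/
def IsLoxodromic (g : PSL2C) : Prop := ¬ ∃ r : ℝ, 0 ≤ r ∧ r ≤ 4 ∧ trSq g = (r : ℂ)

/-- `g` is parabolic iff `g ≠ 1` and `tr² g = 4`. -/
def IsParabolic (g : PSL2C) : Prop := g ≠ 1 ∧ trSq g = 4

/-- `g` is elliptic iff `g ≠ 1` and `tr² g` is a real number in `[0,4)`. -/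
def IsElliptic (g : PSL2C) : Prop := g ≠ 1 ∧ ∃ r : ℝ, 0 ≤ r ∧ r < 4 ∧ trSq g = (r : ℂ)

lemma sl2_toLin'_injective (g : SL2C) :
    Function.Injective (Matrix.toLin' (g : Matrix (Fin 2) (Fin 2) ℂ)) := by
  intro v w h
  have h2 : Matrix.toLin' ((g⁻¹ : SL2C) : Matrix (Fin 2) (Fin 2) ℂ)
      (Matrix.toLin' ((g : SL2C) : Matrix (Fin 2) (Fin 2) ℂ) v) =
      Matrix.toLin' ((g⁻¹ : SL2C) : Matrix (Fin 2) (Fin 2) ℂ)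
      (Matrix.toLin' ((g : SL2C) : Matrix (Fin 2) (Fin 2) ℂ) w) := by rw [h]
  rwa [← Matrix.toLin'_mul_apply, ← Matrix.toLin'_mul_apply,
    ← Matrix.SpecialLinearGroup.coe_mul, inv_mul_cancel,
    Matrix.SpecialLinearGroup.coe_one, Matrix.toLin'_one, LinearMap.id_apply,
    LinearMap.id_apply] at h2

/-- The action of `PSL(2,ℂ)` on `ℙ¹(ℂ)` by Möbius transformations (independent of the
choice of representative, since the center acts trivially on lines). -/
def pslAct (g : PSL2C) (x : P1) : P1 :=
  Projectivization.map (Matrix.toLin' ((Quotient.out g : SL2C) : Matrix (Fin 2) (Fin 2) ℂ))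
    (sl2_toLin'_injective _) x

/-- A subgroup of `PSL(2,ℂ)` is elementary if it has a nonempty invariant subset of `ℙ¹(ℂ)`
with at most two elements, or its closure is compact. -/
def IsElementarySubgroup (G : Subgroup PSL2C) : Prop :=
  (∃ S : Set P1, S.Nonempty ∧ S.Finite ∧ S.ncard ≤ 2 ∧ ∀ g ∈ G, pslAct g '' S = S) ∨
    IsCompact (closure (G : Set PSL2C))

/-- A homomorphism to `PSL(2,ℂ)` is non-elementary if its image is non-elementary. -/
def IsNonElem {H : Type*} [Group H] (ρ : H →* PSL2C) : Prop :=
  ¬ IsElementarySubgroup ρ.range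

/-- `g` sends a fixed point of `h` to the other one. -/
def SendsFixedToOther (g h : PSL2C) : Prop :=
  ∃ p q : P1, p ≠ q ∧ pslAct h p = p ∧ pslAct h q = q ∧ (pslAct g p = q ∨ pslAct g q = p)

/-- `g` interchanges the two fixed points of `h`. -/
def InterchangesFixed (g h : PSL2C) : Prop :=
  ∃ p q : P1, p ≠ q ∧ pslAct h p = p ∧ pslAct h q = q ∧ pslAct g p = q ∧ pslAct g q = p

/-- `PSL(2,ℝ)` as a subgroup of `PSL(2,ℂ)`: the image of `SL(2,ℝ)`. -/
def PSL2R : Subgroup PSL2C :=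
  (projPSL.comp (Matrix.SpecialLinearGroup.map (n := Fin 2) Complex.ofRealHom)).range

/-- `γ₁, γ₂` generate a rank-two Schottky group: the induced map from the free group `F₂` is
injective, with discrete image, all of whose nontrivial elements are loxodromic. -/
def GeneratesSchottky (γ₁ γ₂ : PSL2C) : Prop :=
  Function.Injective (FreeGroup.lift ![γ₁, γ₂] : FreeGroup (Fin 2) →* PSL2C) ∧
    DiscreteTopology ((FreeGroup.lift ![γ₁, γ₂] : FreeGroup (Fin 2) →* PSL2C).range) ∧
    ∀ g ∈ (FreeGroup.lift ![γ₁, γ₂] : FreeGroup (Fin 2) →* PSL2C).range, g ≠ 1 → IsLoxodromic g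

/-- The commutator `[x,y] = y⁻¹x⁻¹yx` in a free group. -/
def commF {α : Type*} (x y : FreeGroup α) : FreeGroup α := y⁻¹ * x⁻¹ * y * x

/-- The surface relator `[a_g,b_g]⋯[a₁,b₁]`. -/
def surfaceRel (g : ℕ) : FreeGroup (Fin g × Bool) :=
  (((List.finRange g).reverse).map
    (fun i => commF (FreeGroup.of (i, false)) (FreeGroup.of (i, true)))).prod

/-- The genus-`g` surface group `Γ_g`. -/
abbrev SurfaceGroup (g : ℕ) : Type :=
  PresentedGroup ({surfaceRel g} : Set (FreeGroup (Fin g × Bool)))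

/-- The generator `a_{i+1}` of `Γ_g`. -/
def sgA (g : ℕ) (i : Fin g) : SurfaceGroup g := PresentedGroup.of (i, false)

/-- The generator `b_{i+1}` of `Γ_g`. -/
def sgB (g : ℕ) (i : Fin g) : SurfaceGroup g := PresentedGroup.of (i, true)

/-- The genus-2 surface group `Γ₂`. -/
abbrev Gamma2 : Type := SurfaceGroup 2
def a1 : Gamma2 := sgA 2 0
def b1 : Gamma2 := sgB 2 0
def a2 : Gamma2 := sgA 2 1
def b2 : Gamma2 := sgB 2 1

/-- Relations for the group `Γ = ⟨q₁,…,q₆ ∣ qᵢ² = 1, q₁q₂q₃q₄q₅q₆ = 1⟩`. -/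
def pentagonRels : Set (FreeGroup (Fin 6)) :=
  (Set.range fun i : Fin 6 => FreeGroup.of i * FreeGroup.of i) ∪
    {((List.finRange 6).map FreeGroup.of).prod}

/-- The group `Γ = ⟨q₁,…,q₆ ∣ qᵢ² = 1, q₁q₂q₃q₄q₅q₆ = 1⟩`. -/
abbrev GammaP : Type := PresentedGroup pentagonRels

/-- The generator `q_{i+1}` of `Γ`. -/
def qgen (i : Fin 6) : GammaP := PresentedGroup.of i

lemma qgen_mul_self (i : Fin 6) : qgen i * qgen i = 1 := by
  have hmem : FreeGroup.of i * FreeGroup.of i ∈ pentagonRels :=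
    Set.mem_union_left _ ⟨i, rfl⟩
  have h : (PresentedGroup.mk pentagonRels (FreeGroup.of i * FreeGroup.of i)) = 1 :=
    (QuotientGroup.eq_one_iff _).mpr (Subgroup.subset_normalClosure hmem)
  rw [_root_.map_mul] at h
  exact h

lemma qgen_prod : qgen 0 * (qgen 1 * (qgen 2 * (qgen 3 * (qgen 4 * qgen 5)))) = 1 := by
  have hmem : ((List.finRange 6).map FreeGroup.of).prod ∈ pentagonRels :=
    Set.mem_union_right _ rfl
  have h : (PresentedGroup.mk pentagonRels (((List.finRange 6).map FreeGroup.of).prod)) = 1 :=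
    (QuotientGroup.eq_one_iff _).mpr (Subgroup.subset_normalClosure hmem)
  have h6 : List.finRange 6 = [0, 1, 2, 3, 4, 5] := by decide
  rw [h6] at h
  simp only [List.map_cons, List.map_nil, List.prod_cons, List.prod_nil, mul_one,
    _root_.map_mul] at h
  exact h

lemma pent_helper {G : Type*} [Group G] (x : Fin 6 → G) (hx : ∀ i, x i * x i = 1)
    (hp : x 0 * (x 1 * (x 2 * (x 3 * (x 4 * x 5)))) = 1) :
    (x 4 * x 5)⁻¹ * (x 4 * x 3)⁻¹ * (x 4 * x 5) * (x 4 * x 3) *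
      ((x 1 * x 2)⁻¹ * (x 1 * x 0)⁻¹ * (x 1 * x 2) * (x 1 * x 0)) = 1 := by
  have hinv : ∀ i, (x i)⁻¹ = x i := fun i => inv_eq_of_mul_eq_one_right (hx i)
  have hrev : x 5 * (x 4 * (x 3 * (x 2 * (x 1 * x 0)))) = 1 := by
    have h := congrArg (·⁻¹) hp
    simpa [_root_.mul_inv_rev, hinv, mul_assoc] using h
  have key : ∀ (i : Fin 6) (t : G), x i * (x i * t) = t := fun i t => by
    rw [← mul_assoc, hx, one_mul]
  have key2 : ∀ t : G, x 5 * (x 4 * (x 3 * (x 2 * (x 1 * (x 0 * t))))) = t := fun t => by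
    calc x 5 * (x 4 * (x 3 * (x 2 * (x 1 * (x 0 * t)))))
        = (x 5 * (x 4 * (x 3 * (x 2 * (x 1 * x 0))))) * t := by simp [mul_assoc]
      _ = t := by rw [hrev, one_mul]
  simp only [_root_.mul_inv_rev, hinv, mul_assoc]
  simp only [key, key2]
  exact hrev

/-- The images of the generators `a₁, b₁, a₂, b₂` under `ι`. -/
def pentMap : Fin 2 × Bool → GammaP
  | (0, false) => qgen 1 * qgen 0
  | (0, true) => qgen 1 * qgen 2
  | (1, false) => qgen 4 * qgen 3
  | (1, true) => qgen 4 * qgen 5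

lemma surfaceRel_two :
    surfaceRel 2 = commF (FreeGroup.of ((1 : Fin 2), false)) (FreeGroup.of ((1 : Fin 2), true)) *
      commF (FreeGroup.of ((0 : Fin 2), false)) (FreeGroup.of ((0 : Fin 2), true)) := by
  have h : List.finRange 2 = [0, 1] := by decide
  simp [surfaceRel, h]

/-- The embedding `ι : Γ₂ → Γ`, `a₁ ↦ q₂q₁`, `b₁ ↦ q₂q₃`, `a₂ ↦ q₅q₄`, `b₂ ↦ q₅q₆`. -/
def iota : Gamma2 →* GammaP :=
  PresentedGroup.toGroup (f := pentMap) (by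
    intro r hr
    rw [Set.mem_singleton_iff] at hr
    subst hr
    rw [surfaceRel_two]
    simp only [commF, _root_.map_mul, _root_.map_inv, FreeGroup.lift_apply_of]
    have h01 : pentMap ((0 : Fin 2), false) = qgen 1 * qgen 0 := rfl
    have h02 : pentMap ((0 : Fin 2), true) = qgen 1 * qgen 2 := rfl
    have h11 : pentMap ((1 : Fin 2), false) = qgen 4 * qgen 3 := rfl
    have h12 : pentMap ((1 : Fin 2), true) = qgen 4 * qgen 5 := rfl
    rw [h01, h02, h11, h12]
    exact pent_helper (fun i => qgen i) qgen_mul_self qgen_prod)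

/-- A pentagon representation: a non-elementary `ρ : Γ₂ → PSL(2,ℂ)` extending to `Γ` with
exactly one `qᵢ` killed. -/
def IsPentagonRep (ρ : Gamma2 →* PSL2C) : Prop :=
  IsNonElem ρ ∧ ∃ ρ' : GammaP →* PSL2C, ρ'.comp iota = ρ ∧ ∃! i : Fin 6, ρ' (qgen i) = 1

/-- A primitive element of the free group `F₂`: part of a free basis. -/
def IsPrimitiveF2 (γ : FreeGroup (Fin 2)) : Prop :=
  ∃ φ : MulAut (FreeGroup (Fin 2)), φ (FreeGroup.of 0) = γ

/-- `pp` and `pm` are the attracting resp. repelling fixed points of `α`: for a representative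
`A ∈ SL(2,ℂ)` with eigenvalues `l, l⁻¹`, `|l| > 1`, they are the corresponding eigenlines. -/
def IsAttrRep (α : PSL2C) (pp pm : P1) : Prop :=
  ∃ A : SL2C, projPSL A = α ∧ ∃ l : ℂ, 1 < ‖l‖ ∧
    ∃ (v w : Fin 2 → ℂ) (hv : v ≠ 0) (hw : w ≠ 0),
      (A : Matrix (Fin 2) (Fin 2) ℂ) *ᵥ v = l • v ∧
      (A : Matrix (Fin 2) (Fin 2) ℂ) *ᵥ w = l⁻¹ • w ∧
      pp = Projectivization.mk ℂ v hv ∧ pm = Projectivization.mk ℂ w hw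

/- Lifts `Qᵢ ∈ SL(2,ℂ)` of the involutions `ρ'(qᵢ)` satisfy `Qᵢ² = ±1`, with `+1`
exactly when `ρ'(qᵢ) = 1`, and `D = Q₁⋯Q₆ = ±1`. Commutators do not see central factors, so a lift
`σ` of `ρ' ∘ ι` forces the surface relator to vanish on `Q₂Q₁, Q₂Q₃, Q₅Q₄, Q₅Q₆`. Rewriting
`[Q₂Q₁, Q₂Q₃] = (Q₁Q₂Q₃)⁻¹ Q₃Q₂Q₁` and using that `Q₁Q₂Q₃ · Q₃Q₂Q₁` is central, that value is
`Q₁²⋯Q₆² · D⁻² = Q₁²⋯Q₆²`, a product of five factors `-1` and one `+1`: a contradiction. -/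

open Subgroup
open scoped MatrixGroups

section CentralElements

variable {G : Type*} [Group G]

lemma inv_mul_mul_of_mem_center {c : G} (hc : c ∈ center G) (g : G) : c⁻¹ * g * c = g := by
  rw [mul_assoc, mem_center_iff.mp hc g, inv_mul_cancel_left]

lemma mul_mul_of_mem_center {c : G} (hc : c ∈ center G) (g h : G) : g * c * h = c * (g * h) := by
  rw [mem_center_iff.mp hc g, mul_assoc]

def surfaceCommutator (x y : G) : G := y⁻¹ * x⁻¹ * y * x

def genus2Relator (a₁ b₁ a₂ b₂ : G) : G := surfaceCommutator a₂ b₂ * surfaceCommutator a₁ b₁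

lemma map_genus2Relator {H : Type*} [Group H] (f : G →* H) (a₁ b₁ a₂ b₂ : G) :
    f (genus2Relator a₁ b₁ a₂ b₂) = genus2Relator (f a₁) (f b₁) (f a₂) (f b₂) := by
  simp only [genus2Relator, surfaceCommutator, map_mul, map_inv]

lemma surfaceCommutator_mul_of_mem_center {z w : G} (hz : z ∈ center G) (hw : w ∈ center G)
    (x y : G) : surfaceCommutator (z * x) (w * y) = surfaceCommutator x y := calc
  _ = y⁻¹ * (w⁻¹ * (x⁻¹ * z⁻¹) * w) * (y * z * x) := by simp only [surfaceCommutator]; group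
  _ = y⁻¹ * x⁻¹ * (z⁻¹ * y * z) * x := by rw [inv_mul_mul_of_mem_center hw]; group
  _ = surfaceCommutator x y := by rw [inv_mul_mul_of_mem_center hz]; rfl

lemma surfaceCommutator_eq_of_map_eq {H : Type*} [Group H] {π : G →* H} (hπ : π.ker ≤ center G)
    {x x' y y' : G} (hx : π x' = π x) (hy : π y' = π y) :
    surfaceCommutator x' y' = surfaceCommutator x y := by
  have hcenter {g h : G} (hgh : π g = π h) : g * h⁻¹ ∈ center G :=
    hπ (by rw [MonoidHom.mem_ker, map_mul, map_inv, hgh, mul_inv_cancel])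
  calc surfaceCommutator x' y' = surfaceCommutator (x' * x⁻¹ * x) (y' * y⁻¹ * y) := by
        rw [inv_mul_cancel_right, inv_mul_cancel_right]
    _ = surfaceCommutator x y := surfaceCommutator_mul_of_mem_center (hcenter hx) (hcenter hy) x y

lemma surfaceCommutator_mul_mul (x y z : G) :
    surfaceCommutator (y * x) (y * z) = (x * y * z)⁻¹ * (z * y * x) := by
  simp only [surfaceCommutator]; group

lemma mul_mul_mul_reverse_of_mem_center {x y z : G} (hy : y * y ∈ center G)
    (hz : z * z ∈ center G) : x * y * z * (z * y * x) = z * z * (y * y) * (x * x) := calc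
  _ = x * y * (z * z) * (y * x) := by group
  _ = z * z * (x * (y * y) * x) := by rw [mul_mul_of_mem_center hz]; group
  _ = z * z * (y * y) * (x * x) := by rw [mul_mul_of_mem_center hy]; group

lemma inv_mul_mul_inv_mul_of_mem_center {x y a b : G} (hyb : y * b ∈ center G)
    (hxy : x * y ∈ center G) :
    y⁻¹ * b * (x⁻¹ * a) = ((x * y) * (x * y))⁻¹ * ((y * b) * (x * a)) := by
  have hsq : (x * y) * (x * y) = x * x * (y * y) := by
    rw [← mul_mul_of_mem_center hxy]; group
  calc _ = y⁻¹ * y⁻¹ * ((y * b) * (x⁻¹ * x⁻¹)) * (x * a) := by group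
    _ = ((x * y) * (x * y))⁻¹ * ((y * b) * (x * a)) := by
      rw [← mem_center_iff.mp hyb, hsq]; group

lemma genus2Relator_pentagon (Q : Fin 6 → G) (hsq : ∀ i, Q i * Q i ∈ center G) {D : G}
    (hD : D ∈ center G) (hQD : Q 0 * (Q 1 * (Q 2 * (Q 3 * (Q 4 * Q 5)))) = D) :
    genus2Relator (Q 1 * Q 0) (Q 1 * Q 2) (Q 4 * Q 3) (Q 4 * Q 5) =
      (D * D)⁻¹ *
        ((Q 5 * Q 5 * (Q 4 * Q 4) * (Q 3 * Q 3)) * (Q 2 * Q 2 * (Q 1 * Q 1) * (Q 0 * Q 0))) := by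
  have hD' : Q 0 * Q 1 * Q 2 * (Q 3 * Q 4 * Q 5) ∈ center G := by
    simpa only [mul_assoc, hQD] using hD
  have hpal₁ := mul_mul_mul_reverse_of_mem_center (x := Q 0) (hsq 1) (hsq 2)
  have hpal₂ := mul_mul_mul_reverse_of_mem_center (x := Q 3) (hsq 4) (hsq 5)
  have hC₂ : Q 3 * Q 4 * Q 5 * (Q 5 * Q 4 * Q 3) ∈ center G := by
    rw [hpal₂]; exact mul_mem (mul_mem (hsq 5) (hsq 4)) (hsq 3)
  rw [genus2Relator, surfaceCommutator_mul_mul, surfaceCommutator_mul_mul,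
    inv_mul_mul_inv_mul_of_mem_center hC₂ hD', hpal₁, hpal₂]
  simp only [hQD, mul_assoc]

end CentralElements

section SL2

variable {K : Type*} [Field K]

lemma SL2_eq_one_or_eq_neg_one_of_mem_center {z : SL(2, K)} (hz : z ∈ center SL(2, K)) :
    z = 1 ∨ z = -1 := by
  obtain ⟨r, hr, hrz⟩ := Matrix.SpecialLinearGroup.mem_center_iff.mp hz
  rw [Fintype.card_fin, sq, mul_self_eq_one_iff] at hr
  rcases hr with rfl | rfl
  · exact Or.inl (Subtype.ext (by rw [← hrz, map_one, Matrix.SpecialLinearGroup.coe_one]))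
  · exact Or.inr (Subtype.ext (by
      rw [← hrz, map_neg, map_one, Matrix.SpecialLinearGroup.coe_neg,
        Matrix.SpecialLinearGroup.coe_one]))

lemma SL2_mul_self_eq_one_of_mem_center {z : SL(2, K)} (hz : z ∈ center SL(2, K)) :
    z * z = 1 := by
  rcases SL2_eq_one_or_eq_neg_one_of_mem_center hz with rfl | rfl <;> simp

variable [NeZero (2 : K)]

lemma SL2_neg_one_ne_one : (-1 : SL(2, K)) ≠ 1 := by
  intro h
  have h00 := congrArg (fun g : SL(2, K) => (g : Matrix (Fin 2) (Fin 2) K) 0 0) h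
  simp only [Matrix.SpecialLinearGroup.coe_neg, Matrix.SpecialLinearGroup.coe_one,
    Matrix.neg_apply, Matrix.one_apply_eq] at h00
  exact two_ne_zero (by linear_combination -h00 : (2 : K) = 0)

/-- An involution of `SL(2,K)` equals its adjugate, which forces it to be scalar. -/
lemma SL2_mem_center_of_mul_self_eq_one {X : SL(2, K)} (hX : X * X = 1) :
    X ∈ center SL(2, K) := by
  have hinv := congrArg (fun g : SL(2, K) => (g : Matrix (Fin 2) (Fin 2) K))
    (inv_eq_of_mul_eq_one_right hX)
  simp only [Matrix.SpecialLinearGroup.SL2_inv_expl] at hinv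
  have eq_zero_of_neg_eq (b : K) (h : -b = b) : b = 0 :=
    (mul_eq_zero.mp (by linear_combination -h : (2 : K) * b = 0)).resolve_left two_ne_zero
  have hb : X 0 1 = 0 := eq_zero_of_neg_eq _ (by simpa using congrFun (congrFun hinv 0) 1)
  have hc : X 1 0 = 0 := eq_zero_of_neg_eq _ (by simpa using congrFun (congrFun hinv 1) 0)
  have hd : X 1 1 = X 0 0 := by simpa using congrFun (congrFun hinv 0) 0
  have hdet := X.det_coe
  rw [Matrix.det_fin_two, hb, hd] at hdet
  refine Matrix.SpecialLinearGroup.mem_center_iff.mpr ⟨X 0 0, by simpa [sq] using hdet, ?_⟩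
  ext i j
  fin_cases i <;> fin_cases j <;> simp [hb, hc, hd]

lemma SL2_mul_self_eq_one_iff_mem_center {X : SL(2, K)} :
    X * X = 1 ↔ X ∈ center SL(2, K) :=
  ⟨SL2_mem_center_of_mul_self_eq_one, SL2_mul_self_eq_one_of_mem_center⟩

end SL2

lemma projPSL_eq_one_iff {g : SL2C} : projPSL g = 1 ↔ g ∈ center SL2C :=
  QuotientGroup.eq_one_iff g

lemma mul_self_eq_one_iff_projPSL_eq_one {X : SL2C} : X * X = 1 ↔ projPSL X = 1 :=
  SL2_mul_self_eq_one_iff_mem_center.trans projPSL_eq_one_iff.symm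

lemma ker_projPSL : projPSL.ker = center SL2C :=
  QuotientGroup.ker_mk' _

lemma genus2Relator_gamma2 : genus2Relator a1 b1 a2 b2 = 1 := by
  have h := PresentedGroup.one_of_mem (Set.mem_singleton (surfaceRel 2))
  rw [surfaceRel_two] at h
  exact (map_genus2Relator (PresentedGroup.mk _) _ _ _ _).symm.trans h

lemma genus2Relator_eq_one_of_lift {G H : Type*} [Group G] [Group H] {π : G →* H}
    (hπ : π.ker ≤ center G) (σ : Gamma2 →* G) {x₁ y₁ x₂ y₂ : G} (h₁ : π (σ a1) = π x₁)
    (h₂ : π (σ b1) = π y₁) (h₃ : π (σ a2) = π x₂) (h₄ : π (σ b2) = π y₂) :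
    genus2Relator x₁ y₁ x₂ y₂ = 1 := by
  rw [genus2Relator, ← surfaceCommutator_eq_of_map_eq hπ h₁ h₂,
    ← surfaceCommutator_eq_of_map_eq hπ h₃ h₄, ← genus2Relator, ← map_genus2Relator,
    genus2Relator_gamma2, map_one]

lemma iota_a1 : iota a1 = qgen 1 * qgen 0 := PresentedGroup.toGroup.of _
lemma iota_b1 : iota b1 = qgen 1 * qgen 2 := PresentedGroup.toGroup.of _
lemma iota_a2 : iota a2 = qgen 4 * qgen 3 := PresentedGroup.toGroup.of _
lemma iota_b2 : iota b2 = qgen 4 * qgen 5 := PresentedGroup.toGroup.of _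

/-- a representation `ρ' : Γ → PSL(2,ℂ)` killing exactly one `qᵢ` gives a
representation `ρ' ∘ ι` of `Γ₂` which does not lift to `SL(2,ℂ)`. -/
theorem statement2 (ρ' : GammaP →* PSL2C) (h : ∃! i : Fin 6, ρ' (qgen i) = 1) :
    ¬ ∃ σ : Gamma2 →* SL2C, projPSL.comp σ = ρ'.comp iota := by
  rintro ⟨σ, hσ⟩
  obtain ⟨i₀, hi₀, huniq⟩ := h
  choose Q hQ using fun i => QuotientGroup.mk'_surjective (center SL2C) (ρ' (qgen i))
  have hQ : ∀ i, projPSL (Q i) = ρ' (qgen i) := hQ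
  have hsq : ∀ i, Q i * Q i ∈ center SL2C := fun i => projPSL_eq_one_iff.mp (by
    rw [map_mul, hQ, ← map_mul, qgen_mul_self, map_one])
  have hD : Q 0 * (Q 1 * (Q 2 * (Q 3 * (Q 4 * Q 5)))) ∈ center SL2C := projPSL_eq_one_iff.mp (by
    simp only [map_mul, hQ]; simp only [← map_mul, qgen_prod, map_one])
  have hlift {x : Gamma2} {i j : Fin 6} (hx : iota x = qgen i * qgen j) :
      projPSL (σ x) = projPSL (Q i * Q j) := by
    rw [← MonoidHom.comp_apply, hσ, MonoidHom.comp_apply, hx, map_mul, map_mul, hQ, hQ]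
  have hrel := genus2Relator_eq_one_of_lift ker_projPSL.le σ (hlift iota_a1) (hlift iota_b1)
    (hlift iota_a2) (hlift iota_b2)
  rw [genus2Relator_pentagon Q hsq hD rfl, SL2_mul_self_eq_one_of_mem_center hD, inv_one,
    one_mul] at hrel
  have hsign (i : Fin 6) : Q i * Q i = if i = i₀ then 1 else -1 := by
    split_ifs with hi
    · rwa [hi, mul_self_eq_one_iff_projPSL_eq_one, hQ]
    · refine (SL2_eq_one_or_eq_neg_one_of_mem_center (hsq i)).resolve_left fun h1 => hi ?_
      rw [mul_self_eq_one_iff_projPSL_eq_one, hQ] at h1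
      exact huniq i h1
  simp only [hsign] at hrel
  fin_cases i₀ <;> simp [SL2_neg_one_ne_one] at hrel
end
end

section
/- There exists a group homomorphism ρ' : Γ → PSL(2,ℂ) whose image is contained in PSL(2,ℝ), such that ρ'(q₆) = 1, ρ'(qᵢ) ≠ 1 for all 1 ≤ i ≤ 5, and ρ' ∘ ι : Γ₂ → PSL(2,ℂ) is non-elementary. (In particular, pentagon representations exist.) -/
/- Common setup: PSL(2,ℂ), its action on ℙ¹(ℂ), loxodromic/parabolic/elliptic elements,
elementary subgroups, surface groups, the pentagon group Γ and the embedding ι. -/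

noncomputable section

open Matrix

/-!
Send `q₆` to `1` and `q₁, …, q₅` to half-turns of the hyperbolic plane, the images of trace-zero
matrices `R₁, …, R₅ ∈ SL(2,ℝ)` with `R₁R₂R₃R₄R₅ = -1`. Trace-zero matrices square to `-1`, so the
relations of `Γ` hold in `PSL(2,ℝ)`. The image of `Γ₂` contains `ρ(a₁) = [R₂R₁] = [diag(-2, -1/2)]`
and `ρ(b₁) = [R₂R₃]`, a matrix without zero entries. The traces of the powers of `ρ(a₁)` are
unbounded, so the image does not have compact closure. A set of at most two points invariant under
the image is fixed pointwise by the squares of `ρ(a₁)` and of its conjugate by `ρ(b₁)`; the first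
fixes only `0` and `∞`, the second only their images under `ρ(b₁)`, which are other points.
-/

lemma Matrix.SpecialLinearGroup.coe_eq_one_or_neg_one_of_mem_center {K : Type*} [Field K]
    {z : Matrix.SpecialLinearGroup (Fin 2) K} (hz : z ∈ Subgroup.center _) :
    (z : Matrix (Fin 2) (Fin 2) K) = 1 ∨ (z : Matrix (Fin 2) (Fin 2) K) = -1 := by
  obtain ⟨r, hr, hz⟩ := Matrix.SpecialLinearGroup.mem_center_iff.mp hz
  rw [Fintype.card_fin, sq] at hr
  rcases mul_self_eq_one_iff.mp hr with rfl | rfl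
  · exact Or.inl (by rw [← hz]; rfl)
  · exact Or.inr (by rw [← hz, scalar_apply, ← diagonal_one, ← diagonal_neg])

lemma coe_eq_or_eq_neg_of_projPSL_eq {A B : SL2C} (h : projPSL A = projPSL B) :
    (B : Matrix (Fin 2) (Fin 2) ℂ) = A ∨ (B : Matrix (Fin 2) (Fin 2) ℂ) = -A := by
  obtain ⟨z, hz, hAz⟩ := (QuotientGroup.mk'_eq_mk' (N := Subgroup.center SL2C)).mp h
  rw [← hAz, Matrix.SpecialLinearGroup.coe_mul]
  rcases Matrix.SpecialLinearGroup.coe_eq_one_or_neg_one_of_mem_center hz with hz | hz <;>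
    simp [hz]

lemma SL2C.mulVec_ne_zero (A : SL2C) {v : Fin 2 → ℂ} (hv : v ≠ 0) :
    (A : Matrix (Fin 2) (Fin 2) ℂ) *ᵥ v ≠ 0 :=
  (sl2_toLin'_injective A).ne_iff' (map_zero _) |>.mpr hv

lemma pslAct_projPSL_mk (A : SL2C) {v : Fin 2 → ℂ} (hv : v ≠ 0) :
    pslAct (projPSL A) (Projectivization.mk ℂ v hv) =
      Projectivization.mk ℂ ((A : Matrix (Fin 2) (Fin 2) ℂ) *ᵥ v) (A.mulVec_ne_zero hv) := by
  rw [pslAct, Projectivization.map_mk, Projectivization.mk_eq_mk_iff']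
  rcases coe_eq_or_eq_neg_of_projPSL_eq (Quotient.out_eq (projPSL A)).symm with h | h
  · exact ⟨1, by simp [h]⟩
  · exact ⟨-1, by simp [h]⟩

lemma pslAct_mul (g h : PSL2C) (x : P1) : pslAct (g * h) x = pslAct g (pslAct h x) := by
  obtain ⟨A, rfl⟩ := QuotientGroup.mk'_surjective _ g
  obtain ⟨B, rfl⟩ := QuotientGroup.mk'_surjective _ h
  induction x using Projectivization.ind with
  | h v hv =>
    change pslAct (projPSL (A * B)) _ = pslAct (projPSL A) (pslAct (projPSL B) _)
    simp only [pslAct_projPSL_mk, Matrix.mulVec_mulVec]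
    rfl

lemma pslAct_one (x : P1) : pslAct 1 x = x := by
  induction x using Projectivization.ind with
  | h v hv =>
    rw [← map_one projPSL, pslAct_projPSL_mk]
    simp

lemma pslAct_injective (g : PSL2C) : Function.Injective (pslAct g) :=
  Function.LeftInverse.injective (g := pslAct g⁻¹) fun x => by
    rw [← pslAct_mul, inv_mul_cancel, pslAct_one]

lemma Set.apply_apply_eq_of_image_eq {α : Type*} {f : α → α} (hf : Function.Injective f)
    {S : Set α} (hfin : S.Finite) (hcard : S.ncard ≤ 2) (hS : f '' S = S) {x : α}
    (hx : x ∈ S) : f (f x) = x := by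
  have hmaps : ∀ y ∈ S, f y ∈ S := fun y hy => hS ▸ Set.mem_image_of_mem f hy
  by_cases hfx : f x = x
  · rw [hfx, hfx]
  have hpair : {x, f x} = S :=
    Set.eq_of_subset_of_ncard_le (Set.insert_subset hx (Set.singleton_subset_iff.mpr
      (hmaps x hx))) (by rwa [Set.ncard_pair (Ne.symm hfx)]) hfin
  rcases hpair ▸ hmaps _ (hmaps x hx) with h | h
  · exact h
  · exact absurd (hf h) hfx

def basisPoint (i : Fin 2) : P1 := Projectivization.mk ℂ (Pi.single i 1) (by simp)

lemma mk_ne_basisPoint {u : Fin 2 → ℂ} (hu : ∀ j, u j ≠ 0) (i : Fin 2) :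
    Projectivization.mk ℂ u (fun h => hu 0 (congrFun h 0)) ≠ basisPoint i := by
  rw [basisPoint, Ne, Projectivization.mk_eq_mk_iff']
  rintro ⟨a, ha⟩
  obtain ⟨j, hj⟩ := exists_ne i
  exact hu j (by simp [← ha, hj])

lemma eq_basisPoint_of_pslAct_diagonal {A : SL2C} {d₀ d₁ : ℂ}
    (hA : (A : Matrix (Fin 2) (Fin 2) ℂ) = diagonal ![d₀, d₁]) (hd : d₀ ≠ d₁) {x : P1}
    (hx : pslAct (projPSL A) x = x) : x = basisPoint 0 ∨ x = basisPoint 1 := by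
  induction x using Projectivization.ind with
  | h v hv =>
    rw [pslAct_projPSL_mk, Projectivization.mk_eq_mk_iff'] at hx
    obtain ⟨a, ha⟩ := hx
    have h0 := congrFun ha 0
    have h1 := congrFun ha 1
    simp only [hA, mulVec_diagonal, Pi.smul_apply, smul_eq_mul, Matrix.cons_val_zero,
      Matrix.cons_val_one] at h0 h1
    rw [basisPoint, basisPoint, Projectivization.mk_eq_mk_iff', Projectivization.mk_eq_mk_iff']
    by_cases hv1 : v 1 = 0
    · exact Or.inl ⟨v 0, funext fun j => by fin_cases j <;> simp [hv1]⟩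
    have hv0 : v 0 = 0 := by
      by_contra hv0
      exact hd ((mul_right_cancel₀ hv0 h0).symm.trans (mul_right_cancel₀ hv1 h1))
    exact Or.inr ⟨v 1, funext fun j => by fin_cases j <;> simp [hv0]⟩

def absTr : PSL2C → ℝ :=
  Quotient.lift (fun A : SL2C => ‖trace (A : Matrix (Fin 2) (Fin 2) ℂ)‖) fun A B hAB => by
    rcases coe_eq_or_eq_neg_of_projPSL_eq (Quotient.sound hAB) with h | h <;> simp [h]

lemma absTr_projPSL (A : SL2C) :
    absTr (projPSL A) = ‖trace (A : Matrix (Fin 2) (Fin 2) ℂ)‖ :=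
  rfl

lemma continuous_absTr : Continuous absTr :=
  Continuous.quotient_lift (continuous_norm.comp (continuous_subtype_val.matrix_trace)) _

lemma not_isCompact_closure_of_diagonal_mem {G : Subgroup PSL2C} {A : SL2C} {d₀ d₁ : ℂ}
    (hA : (A : Matrix (Fin 2) (Fin 2) ℂ) = diagonal ![d₀, d₁]) (hd₀ : 1 < ‖d₀‖)
    (hd₁ : ‖d₁‖ ≤ 1) (hAG : projPSL A ∈ G) : ¬ IsCompact (closure (G : Set PSL2C)) := by
  intro hK
  obtain ⟨C, hC⟩ := (hK.image continuous_absTr).bddAbove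
  obtain ⟨m, hm⟩ := pow_unbounded_of_one_lt (C + 1) hd₀
  have hpow : ‖d₀‖ ^ m - 1 ≤ absTr (projPSL A ^ m) := by
    rw [← map_pow, absTr_projPSL, Matrix.SpecialLinearGroup.coe_pow, hA, diagonal_pow,
      trace_diagonal, Fin.sum_univ_two, Pi.pow_apply, Pi.pow_apply, cons_val_zero,
      cons_val_one]
    calc ‖d₀‖ ^ m - 1 ≤ ‖d₀ ^ m‖ - ‖d₁ ^ m‖ := by
          rw [norm_pow, norm_pow]
          gcongr
          exact pow_le_one₀ (norm_nonneg _) hd₁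
      _ ≤ ‖d₀ ^ m + d₁ ^ m‖ := by simpa using norm_sub_norm_le (d₀ ^ m) (-d₁ ^ m)
  have hmem : absTr (projPSL A ^ m) ≤ C :=
    hC (Set.mem_image_of_mem _ (subset_closure (pow_mem hAG m)))
  linarith

lemma not_exists_invariant_set_of_diagonal_mem {G : Subgroup PSL2C} {A N : SL2C} {d₀ d₁ : ℂ}
    (hA : (A : Matrix (Fin 2) (Fin 2) ℂ) = diagonal ![d₀, d₁]) (hd : d₀ ^ 2 ≠ d₁ ^ 2)
    (hN : ∀ i j, (N : Matrix (Fin 2) (Fin 2) ℂ) i j ≠ 0) (hAG : projPSL A ∈ G)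
    (hNG : projPSL N ∈ G) :
    ¬ ∃ S : Set P1, S.Nonempty ∧ S.Finite ∧ S.ncard ≤ 2 ∧ ∀ g ∈ G, pslAct g '' S = S := by
  rintro ⟨S, ⟨x, hx⟩, hfin, hcard, hS⟩
  have hfix : ∀ g ∈ G, pslAct (g * g) x = x := fun g hg => by
    rw [pslAct_mul]
    exact Set.apply_apply_eq_of_image_eq (pslAct_injective g) hfin hcard (hS g hg) hx
  have hA2 : ((A * A : SL2C) : Matrix (Fin 2) (Fin 2) ℂ) = diagonal ![d₀ ^ 2, d₁ ^ 2] := by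
    rw [Matrix.SpecialLinearGroup.coe_mul, hA, diagonal_mul_diagonal]
    congr 1
    ext i
    fin_cases i <;> simp [sq]
  -- `x` is fixed by the squares of `A` and of `N A N⁻¹`, so `x` and `N⁻¹ x` both lie in
  -- `{[e₀], [e₁]}`; but `N` maps `[e₀]` and `[e₁]` off that set.
  have hx₀ : x = basisPoint 0 ∨ x = basisPoint 1 :=
    eq_basisPoint_of_pslAct_diagonal hA2 hd (by simpa using hfix _ hAG)
  have hx₁ :
      pslAct (projPSL N)⁻¹ x = basisPoint 0 ∨ pslAct (projPSL N)⁻¹ x = basisPoint 1 := by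
    refine eq_basisPoint_of_pslAct_diagonal hA2 hd (pslAct_injective (projPSL N) ?_)
    have := hfix _ (G.mul_mem (G.mul_mem hNG hAG) (G.inv_mem hNG))
    simp only [← pslAct_mul, map_mul] at this ⊢
    simpa [mul_assoc, pslAct_one] using this
  have hN_basis : ∀ i j, pslAct (projPSL N) (basisPoint j) ≠ basisPoint i := fun i j => by
    rw [basisPoint, pslAct_projPSL_mk]
    simp only [mulVec_single_one]
    exact mk_ne_basisPoint (fun k => hN k j) i
  have hxN : pslAct (projPSL N) (pslAct (projPSL N)⁻¹ x) = x := by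
    rw [← pslAct_mul, mul_inv_cancel, pslAct_one]
  rcases hx₀ with h₀ | h₀ <;> rcases hx₁ with h₁ | h₁ <;>
    exact hN_basis _ _ (h₁ ▸ hxN ▸ h₀)

lemma not_isElementarySubgroup_of_diagonal_mem {G : Subgroup PSL2C} {A N : SL2C} {d₀ d₁ : ℂ}
    (hA : (A : Matrix (Fin 2) (Fin 2) ℂ) = diagonal ![d₀, d₁]) (hd₀ : 1 < ‖d₀‖)
    (hd₁ : ‖d₁‖ ≤ 1) (hN : ∀ i j, (N : Matrix (Fin 2) (Fin 2) ℂ) i j ≠ 0)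
    (hAG : projPSL A ∈ G) (hNG : projPSL N ∈ G) : ¬ IsElementarySubgroup G := by
  have hd : d₀ ^ 2 ≠ d₁ ^ 2 := fun h => by
    have := congrArg norm h
    rw [norm_pow, norm_pow] at this
    nlinarith [norm_nonneg d₁]
  rintro (hS | hK)
  · exact not_exists_invariant_set_of_diagonal_mem hA hd hN hAG hNG hS
  · exact not_isCompact_closure_of_diagonal_mem hA hd₀ hd₁ hAG hK

lemma projPSL_eq_one_iff_s9 {A : SL2C} :
    projPSL A = 1 ↔
      (A : Matrix (Fin 2) (Fin 2) ℂ) = 1 ∨ (A : Matrix (Fin 2) (Fin 2) ℂ) = -1 := by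
  refine ⟨fun h => ?_, fun h => ?_⟩
  · simpa using coe_eq_or_eq_neg_of_projPSL_eq ((map_one projPSL).trans h.symm)
  · refine (QuotientGroup.eq_one_iff A).mpr (Subgroup.mem_center_iff.mpr fun g => ?_)
    ext : 1
    rcases h with h | h <;> simp [Matrix.SpecialLinearGroup.coe_mul, h]

lemma Matrix.SpecialLinearGroup.coe_mul_self_eq_neg_one_of_trace_eq_zero {R : Type*} [CommRing R]
    (X : SpecialLinearGroup (Fin 2) R) (hX : trace (X : Matrix (Fin 2) (Fin 2) R) = 0) :
    ((X * X : SpecialLinearGroup (Fin 2) R) : Matrix (Fin 2) (Fin 2) R) = -1 := by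
  have hdet := X.prop
  rw [det_fin_two] at hdet
  rw [trace_fin_two] at hX
  ext i j
  fin_cases i <;> fin_cases j <;> simp [coe_mul, mul_apply, Fin.sum_univ_two]
  · linear_combination X 0 0 * hX - hdet
  · linear_combination X 0 1 * hX
  · linear_combination X 1 0 * hX
  · linear_combination X 1 1 * hX - hdet

section GammaP

variable {G : Type*} [Group G] (x : Fin 6 → G) (hsq : ∀ i, x i * x i = 1)
  (hprod : x 0 * (x 1 * (x 2 * (x 3 * (x 4 * x 5)))) = 1)

def GammaP.lift : GammaP →* G :=
  PresentedGroup.toGroup (f := x) fun r hr => by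
    rcases hr with ⟨i, rfl⟩ | rfl
    · simpa using hsq i
    · simpa [List.finRange_succ] using hprod

lemma GammaP.lift_qgen (i : Fin 6) : GammaP.lift x hsq hprod (qgen i) = x i :=
  PresentedGroup.toGroup.of _

lemma GammaP.lift_mem {H : Subgroup G} (hx : ∀ i, x i ∈ H) (y : GammaP) :
    GammaP.lift x hsq hprod y ∈ H :=
  PresentedGroup.generated_by _ (H.comap (GammaP.lift x hsq hprod))
    (fun i => show GammaP.lift x hsq hprod (qgen i) ∈ H by rw [GammaP.lift_qgen]; exact hx i)
    y

end GammaP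

def projPSLReal : SpecialLinearGroup (Fin 2) ℝ →* PSL2C :=
  projPSL.comp (SpecialLinearGroup.map Complex.ofRealHom)

lemma coe_map_ofRealHom (X : SpecialLinearGroup (Fin 2) ℝ) :
    ((SpecialLinearGroup.map Complex.ofRealHom X : SL2C) : Matrix (Fin 2) (Fin 2) ℂ) =
      (X : Matrix (Fin 2) (Fin 2) ℝ).map (↑) :=
  rfl

lemma projPSLReal_eq_one_iff {X : SpecialLinearGroup (Fin 2) ℝ} :
    projPSLReal X = 1 ↔
      (X : Matrix (Fin 2) (Fin 2) ℝ) = 1 ∨ (X : Matrix (Fin 2) (Fin 2) ℝ) = -1 := by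
  have hinj := Matrix.map_injective (m := Fin 2) (n := Fin 2) Complex.ofReal_injective
  rw [projPSLReal, MonoidHom.comp_apply, projPSL_eq_one_iff_s9, coe_map_ofRealHom,
    ← hinj.eq_iff (b := 1), ← hinj.eq_iff (b := -1)]
  simp [Matrix.map_neg]

-- `pentagonMatrix i` is the image of `q_{i+1}`.
def pentagonMatrix : Fin 6 → SpecialLinearGroup (Fin 2) ℝ
  | 0 => ⟨!![0, 1; -1, 0], by norm_num [det_fin_two_of]⟩
  | 1 => ⟨!![0, 2; -(1 / 2), 0], by norm_num [det_fin_two_of]⟩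
  | 2 => ⟨!![2, 1; -5, -2], by norm_num [det_fin_two_of]⟩
  | 3 => ⟨!![7, 5 / 2; -20, -7], by norm_num [det_fin_two_of]⟩
  | 4 => ⟨!![3, 1; -10, -3], by norm_num [det_fin_two_of]⟩
  | 5 => 1

lemma projPSLReal_pentagonMatrix_mul_self (i : Fin 6) :
    projPSLReal (pentagonMatrix i) * projPSLReal (pentagonMatrix i) = 1 := by
  rw [← map_mul, projPSLReal_eq_one_iff]
  by_cases hi : i = 5
  · exact Or.inl (by simp [hi, pentagonMatrix])
  refine Or.inr (Matrix.SpecialLinearGroup.coe_mul_self_eq_neg_one_of_trace_eq_zero _ ?_)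
  fin_cases i <;> simp [pentagonMatrix, trace_fin_two] at hi ⊢

lemma projPSLReal_pentagonMatrix_prod :
    projPSLReal (pentagonMatrix 0) * (projPSLReal (pentagonMatrix 1) *
      (projPSLReal (pentagonMatrix 2) * (projPSLReal (pentagonMatrix 3) *
        (projPSLReal (pentagonMatrix 4) * projPSLReal (pentagonMatrix 5))))) = 1 := by
  simp only [← map_mul, projPSLReal_eq_one_iff]
  right
  simp only [Matrix.SpecialLinearGroup.coe_mul]
  simp only [pentagonMatrix]
  ext i j
  fin_cases i <;> fin_cases j <;> norm_num

def pentagonRep : GammaP →* PSL2C :=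
  GammaP.lift (fun i => projPSLReal (pentagonMatrix i)) projPSLReal_pentagonMatrix_mul_self
    projPSLReal_pentagonMatrix_prod

lemma pentagonRep_qgen (i : Fin 6) : pentagonRep (qgen i) = projPSLReal (pentagonMatrix i) :=
  GammaP.lift_qgen _ _ _ i

lemma pentagonRep_mem_PSL2R (y : GammaP) : pentagonRep y ∈ PSL2R :=
  GammaP.lift_mem _ _ _ (H := PSL2R) (fun i => ⟨pentagonMatrix i, rfl⟩) y

lemma pentagonRep_qgen_ne_one {i : Fin 6} (hi : i ≠ 5) : pentagonRep (qgen i) ≠ 1 := by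
  rw [pentagonRep_qgen, Ne, projPSLReal_eq_one_iff]
  fin_cases i <;> first
    | exact absurd rfl hi
    | rintro (h | h) <;> simpa [pentagonMatrix] using congrFun₂ h 1 0

lemma pentagonRep_iota_a1 :
    pentagonRep (iota a1) = projPSLReal (pentagonMatrix 1 * pentagonMatrix 0) := by
  rw [show iota a1 = qgen 1 * qgen 0 from PresentedGroup.toGroup.of _, map_mul, pentagonRep_qgen,
    pentagonRep_qgen, map_mul]

lemma pentagonRep_iota_b1 :
    pentagonRep (iota b1) = projPSLReal (pentagonMatrix 1 * pentagonMatrix 2) := by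
  rw [show iota b1 = qgen 1 * qgen 2 from PresentedGroup.toGroup.of _, map_mul, pentagonRep_qgen,
    pentagonRep_qgen, map_mul]

lemma coe_map_pentagonMatrix_one_mul_zero :
    ((SpecialLinearGroup.map Complex.ofRealHom (pentagonMatrix 1 * pentagonMatrix 0) : SL2C) :
      Matrix (Fin 2) (Fin 2) ℂ) = diagonal ![-2, -1 / 2] := by
  rw [coe_map_ofRealHom, Matrix.SpecialLinearGroup.coe_mul]
  ext i j
  fin_cases i <;> fin_cases j <;> norm_num [pentagonMatrix, mul_apply, Fin.sum_univ_two]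

lemma coe_map_pentagonMatrix_one_mul_two_ne_zero (i j : Fin 2) :
    ((SpecialLinearGroup.map Complex.ofRealHom (pentagonMatrix 1 * pentagonMatrix 2) : SL2C) :
      Matrix (Fin 2) (Fin 2) ℂ) i j ≠ 0 := by
  rw [coe_map_ofRealHom, Matrix.SpecialLinearGroup.coe_mul]
  fin_cases i <;> fin_cases j <;> norm_num [pentagonMatrix, mul_apply, Fin.sum_univ_two]

lemma isNonElem_pentagonRep_comp_iota : IsNonElem (pentagonRep.comp iota) :=
  not_isElementarySubgroup_of_diagonal_mem coe_map_pentagonMatrix_one_mul_zero (by norm_num)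
    (by norm_num) coe_map_pentagonMatrix_one_mul_two_ne_zero ⟨a1, pentagonRep_iota_a1⟩
    ⟨b1, pentagonRep_iota_b1⟩

/-- pentagon representations exist: there is `ρ' : Γ → PSL(2,ℂ)` with values in
`PSL(2,ℝ)`, killing `q₆` and no other `qᵢ`, with `ρ' ∘ ι` non-elementary. -/
theorem statement9 :
    ∃ ρ' : GammaP →* PSL2C,
      (∀ x : GammaP, ρ' x ∈ PSL2R) ∧ ρ' (qgen 5) = 1 ∧
      (∀ i : Fin 6, i ≠ 5 → ρ' (qgen i) ≠ 1) ∧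
      IsNonElem (ρ'.comp iota) :=
  ⟨pentagonRep, pentagonRep_mem_PSL2R, (pentagonRep_qgen 5).trans (map_one projPSLReal),
    fun _ => pentagonRep_qgen_ne_one, isNonElem_pentagonRep_comp_iota⟩
end
end
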